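/- In the pseudo-Riemannian Lie algebra family, the components F_ijk = F(X_i,X_j,X_k) satisfy: F₁₂₄ = −F₂₁₄ = λ₁, F₂₁₃ = −F₁₂₃ = λ₂, F₄₂₃ = −F₃₂₄ = λ₃, F₃₁₄ = −F₄₁₃ = λ₄, all other components being determined by the symmetry F_ijk = F_ikj or equal to zero; moreover F satisfies the cyclic identity F(x,y,z) + F(y,z,x) + F(z,x,y) = 0 for all x, y, z ∈ 𝔤 (i.e., the manifold belongs to the class 𝒲₃). -/

import Mathlib

noncomputable section

/-- The signature `(2,2)` of the pseudo-Riemannian metric: `ε = (1, 1, −1, −1)`. -/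
def eps : Fin 4 → ℝ := ![1, 1, -1, -1]

/-- The pseudo-Riemannian metric of signature `(2,2)` with
`g(X₁,X₁) = g(X₂,X₂) = 1`, `g(X₃,X₃) = g(X₄,X₄) = −1` and `g(Xᵢ,Xⱼ) = 0` for `i ≠ j`. -/
def gP {L : Type*} [AddCommGroup L] [Module ℝ L] (b : Module.Basis (Fin 4) ℝ L) (x y : L) : ℝ :=
  ∑ i, eps i * (b.repr x i * b.repr y i)

/-- The almost product structure `P` with `PX₁ = X₁`, `PX₂ = X₂`, `PX₃ = −X₃`, `PX₄ = −X₄`. -/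
def PP {L : Type*} [AddCommGroup L] [Module ℝ L] (b : Module.Basis (Fin 4) ℝ L) : L →ₗ[ℝ] L :=
  b.constr ℝ ![b 0, b 1, -b 2, -b 3]

/-- `(∇ₓP)y = (1/2)([x,Py] − P[x,y])`. -/
def nablaPP {L : Type*} [LieRing L] [LieAlgebra ℝ L] (b : Module.Basis (Fin 4) ℝ L) (x y : L) : L :=
  (2⁻¹ : ℝ) • (⁅x, PP b y⁆ - PP b ⁅x, y⁆)

/-- `F(x,y,z) = g((∇ₓP)y, z)`. -/
def FP {L : Type*} [LieRing L] [LieAlgebra ℝ L] (b : Module.Basis (Fin 4) ℝ L) (x y z : L) : ℝ :=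
  gP b (nablaPP b x y) z

/-- The curvature tensor `R(x,y,z,w) = −(1/4)g([x,y],[z,w])`. -/
def RTP {L : Type*} [LieRing L] [LieAlgebra ℝ L] (b : Module.Basis (Fin 4) ℝ L) (x y z w : L) : ℝ :=
  -(4⁻¹ : ℝ) * gP b ⁅x, y⁆ ⁅z, w⁆

/-- The Ricci tensor `ρ(y,z) = Σᵢ εᵢ R(Xᵢ,y,z,Xᵢ)`. -/
def ricP {L : Type*} [LieRing L] [LieAlgebra ℝ L] (b : Module.Basis (Fin 4) ℝ L) (y z : L) : ℝ :=
  ∑ i, eps i * RTP b (b i) y z (b i)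

/-- The scalar curvature `τ = Σᵢ εᵢ ρ(Xᵢ,Xᵢ)`. -/
def tauP {L : Type*} [LieRing L] [LieAlgebra ℝ L] (b : Module.Basis (Fin 4) ℝ L) : ℝ :=
  ∑ i, eps i * ricP b (b i) (b i)

/-- The Nijenhuis tensor `N(x,y) = [x,y] + P[Px,y] + P[x,Py] − [Px,Py]`. -/
def NijP {L : Type*} [LieRing L] [LieAlgebra ℝ L] (b : Module.Basis (Fin 4) ℝ L) (x y : L) : L :=
  ⁅x, y⁆ + PP b ⁅PP b x, y⁆ + PP b ⁅x, PP b y⁆ - ⁅PP b x, PP b y⁆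

/-- The square norm `‖N‖² = Σᵢₖ εᵢ εₖ g(N(Xᵢ,Xₖ), N(Xᵢ,Xₖ))`. -/
def normNijP {L : Type*} [LieRing L] [LieAlgebra ℝ L] (b : Module.Basis (Fin 4) ℝ L) : ℝ :=
  ∑ i, ∑ k, eps i * eps k * gP b (NijP b (b i) (b k)) (NijP b (b i) (b k))

/-- The square norm `‖∇P‖² = Σᵢₖ εᵢ εₖ g((∇_{Xᵢ}P)Xₖ, (∇_{Xᵢ}P)Xₖ)`. -/
def normNablaPP {L : Type*} [LieRing L] [LieAlgebra ℝ L] (b : Module.Basis (Fin 4) ℝ L) : ℝ :=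
  ∑ i, ∑ k, eps i * eps k * gP b (nablaPP b (b i) (b k)) (nablaPP b (b i) (b k))

/-- The index triples `(i,j,k)` (0-indexed) of the possibly-nonzero components
`F_ijk` in the pseudo-Riemannian family: the listed components together with their
images under the symmetry `F_ijk = F_ikj`. -/
def nonzeroTriples : List (Fin 4 × Fin 4 × Fin 4) :=
  [(0, 1, 3), (0, 3, 1), (1, 0, 3), (1, 3, 0),
   (1, 0, 2), (1, 2, 0), (0, 1, 2), (0, 2, 1),
   (3, 1, 2), (3, 2, 1), (2, 1, 3), (2, 3, 1),
   (2, 0, 3), (2, 3, 0), (3, 0, 2), (3, 2, 0)]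


/-! The metric `g` is ad-invariant and `P` is `g`-self-adjoint. Hence
`ω(x,y,z) = g([x,y],z)` is totally skew-symmetric and `2F(x,y,z) = ω(x,Py,z) − ω(x,y,Pz)`,
which is symmetric in `y, z` and has vanishing cyclic sum. On the basis, where `PXᵢ = εᵢXᵢ`,
this reads `F_ijk = ½(ε_j − ε_k) ω_ijk`, so `F_ijk` vanishes unless `i, j, k` are distinct
and `X_j, X_k` lie in different eigenspaces of `P`. -/

namespace LinearMap.BilinForm

variable {R L : Type*} [CommRing R] [LieRing L] [LieAlgebra R L]
  {B : LinearMap.BilinForm R L} {P : Module.End R L}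

theorem lieInvariant_of_basis {ι : Type*} [Fintype ι] (b : Module.Basis ι R L)
    (h : ∀ i j k, B ⁅b i, b j⁆ (b k) = -B (b j) ⁅b i, b k⁆) : B.lieInvariant L := by
  intro x y z
  rw [← b.sum_repr x, ← b.sum_repr y, ← b.sum_repr z]
  simp only [sum_lie, lie_sum, smul_lie, lie_smul, map_sum, map_smul, LinearMap.sum_apply,
    LinearMap.smul_apply, smul_eq_mul, h, Finset.sum_neg_distrib, mul_neg]
  congr 1
  refine Finset.sum_congr rfl fun k _ => ?_
  simp only [Finset.mul_sum]
  rw [Finset.sum_comm]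
  simp only [mul_left_comm]

theorem lieInvariant.apply_lie_swap (hB : B.IsSymm) (hinv : B.lieInvariant L) (x y z : L) :
    B ⁅x, y⁆ z = -B ⁅x, z⁆ y := by
  rw [hinv, hB.eq]

theorem lieInvariant.apply_lie_cyclic (hB : B.IsSymm) (hinv : B.lieInvariant L) (x y z : L) :
    B ⁅x, y⁆ z = B ⁅z, x⁆ y := by
  rw [hinv, hB.eq, ← lie_skew, map_neg, LinearMap.neg_apply, neg_neg]

theorem lieInvariant.apply_lie_comp_sub_comp_lie_comm (hB : B.IsSymm) (hinv : B.lieInvariant L)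
    (hP : LinearMap.IsSelfAdjoint B P) (x y z : L) :
    B (⁅x, P y⁆ - P ⁅x, y⁆) z = B (⁅x, P z⁆ - P ⁅x, z⁆) y := by
  simp only [map_sub, LinearMap.sub_apply, hP _ z, hP _ y, hinv.apply_lie_swap hB x (P y),
    hinv.apply_lie_swap hB x (P z)]
  ring

theorem lieInvariant.apply_lie_comp_sub_comp_lie_cyclic (hB : B.IsSymm)
    (hinv : B.lieInvariant L) (hP : LinearMap.IsSelfAdjoint B P) (x y z : L) :
    B (⁅x, P y⁆ - P ⁅x, y⁆) z + B (⁅y, P z⁆ - P ⁅y, z⁆) x + B (⁅z, P x⁆ - P ⁅z, x⁆) y = 0 := by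
  simp only [map_sub, LinearMap.sub_apply, hP _ x, hP _ y, hP _ z,
    hinv.apply_lie_cyclic hB x (P y), hinv.apply_lie_cyclic hB y (P z),
    hinv.apply_lie_cyclic hB z (P x)]
  ring

end LinearMap.BilinForm

section PseudoRiemannian

variable {L : Type*} [LieRing L] [LieAlgebra ℝ L] (b : Module.Basis (Fin 4) ℝ L)

def gForm : LinearMap.BilinForm ℝ L := Matrix.toBilin b (Matrix.diagonal eps)

theorem gForm_apply (x y : L) : gForm b x y = gP b x y := by
  simp [gForm, gP, Matrix.toBilin_apply, Matrix.diagonal_apply, mul_comm, mul_left_comm]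

theorem gForm_basis (i j : Fin 4) : gForm b (b i) (b j) = if i = j then eps i else 0 := by
  simp only [gForm, Matrix.toBilin_apply, Module.Basis.repr_self, Finsupp.single_apply,
    Matrix.diagonal_apply]
  split_ifs <;> simp_all

theorem gForm_isSymm : (gForm b).IsSymm :=
  ⟨fun x y => by simp only [gForm_apply, gP, mul_comm (b.repr x _)]⟩

theorem gForm_lieInvariant (l1 l2 l3 l4 : ℝ)
    (h12 : ⁅b 0, b 1⁆ = l2 • b 2 - l1 • b 3)
    (h13 : ⁅b 0, b 2⁆ = l2 • b 1 + l4 • b 3)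
    (h14 : ⁅b 0, b 3⁆ = -(l1 • b 1) - l4 • b 2)
    (h23 : ⁅b 1, b 2⁆ = -(l2 • b 0) - l3 • b 3)
    (h24 : ⁅b 1, b 3⁆ = l1 • b 0 + l3 • b 2)
    (h34 : ⁅b 2, b 3⁆ = -(l4 • b 0) + l3 • b 1) :
    (gForm b).lieInvariant L := by
  refine LinearMap.BilinForm.lieInvariant_of_basis b fun i j k => ?_
  fin_cases i <;> fin_cases j <;> fin_cases k <;>
    simp [h12, h13, h14, h23, h24, h34, ← lie_skew (b 1) (b 0), ← lie_skew (b 2) (b 0),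
      ← lie_skew (b 3) (b 0), ← lie_skew (b 2) (b 1), ← lie_skew (b 3) (b 1),
      ← lie_skew (b 3) (b 2), gForm_basis, eps]

theorem PP_basis (i : Fin 4) : PP b (b i) = eps i • b i := by
  rw [PP, b.constr_basis]
  fin_cases i <;> simp [eps]

theorem PP_isSelfAdjoint : LinearMap.IsSelfAdjoint (gForm b) (PP b) := by
  rw [LinearMap.IsSelfAdjoint, LinearMap.isAdjointPair_iff_comp_eq_compl₂]
  refine LinearMap.ext_basis b b fun i j => ?_
  simp only [LinearMap.comp_apply, LinearMap.compl₂_apply, PP_basis, map_smul,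
    LinearMap.smul_apply, gForm_basis, smul_eq_mul]
  split_ifs with h <;> simp [h]

theorem FP_eq (x y z : L) : FP b x y z = 2⁻¹ * gForm b (⁅x, PP b y⁆ - PP b ⁅x, y⁆) z := by
  rw [FP, nablaPP, ← gForm_apply, map_smul, LinearMap.smul_apply, smul_eq_mul]

theorem FP_basis (i j k : Fin 4) :
    FP b (b i) (b j) (b k) = 2⁻¹ * (eps j - eps k) * gForm b ⁅b i, b j⁆ (b k) := by
  rw [FP_eq, map_sub, LinearMap.sub_apply, PP_isSelfAdjoint, PP_basis, PP_basis, lie_smul,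
    map_smul, LinearMap.smul_apply, map_smul, smul_eq_mul, smul_eq_mul]
  ring

theorem mem_nonzeroTriples_of_ne {i j k : Fin 4} (hij : i ≠ j) (hik : i ≠ k)
    (hjk : eps j ≠ eps k) : (i, j, k) ∈ nonzeroTriples := by
  fin_cases i <;> fin_cases j <;> fin_cases k <;> simp_all [eps, nonzeroTriples]

variable {b}

theorem FP_basis_eq_zero (hinv : (gForm b).lieInvariant L) {i j k : Fin 4}
    (h : (i, j, k) ∉ nonzeroTriples) : FP b (b i) (b j) (b k) = 0 := by
  rw [FP_basis]
  by_cases hij : i = j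
  · simp [hij]
  by_cases hik : i = k
  · simp [hik, hinv (b k) (b j) (b k)]
  have hjk : eps j = eps k := by_contra fun hjk => h (mem_nonzeroTriples_of_ne hij hik hjk)
  simp [hjk]

theorem FP_comm (hinv : (gForm b).lieInvariant L) (x y z : L) : FP b x y z = FP b x z y := by
  rw [FP_eq, FP_eq, hinv.apply_lie_comp_sub_comp_lie_comm (gForm_isSymm b) (PP_isSelfAdjoint b)]

theorem FP_cyclic (hinv : (gForm b).lieInvariant L) (x y z : L) :
    FP b x y z + FP b y z x + FP b z x y = 0 := by
  rw [FP_eq, FP_eq, FP_eq, ← mul_add, ← mul_add,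
    hinv.apply_lie_comp_sub_comp_lie_cyclic (gForm_isSymm b) (PP_isSelfAdjoint b), mul_zero]

end PseudoRiemannian

/-- Components (4.4) of `F` in the pseudo-Riemannian family:
`F₁₂₄ = −F₂₁₄ = λ₁`, `F₂₁₃ = −F₁₂₃ = λ₂`, `F₄₂₃ = −F₃₂₄ = λ₃`, `F₃₁₄ = −F₄₁₃ = λ₄`,
all other components are determined by the symmetry `F_ijk = F_ikj` or are zero;
moreover `F` satisfies the cyclic identity, i.e. the manifold is in the class `𝒲₃`. -/
theorem F_components_pseudoRiemannian
    (L : Type*) [LieRing L] [LieAlgebra ℝ L] (b : Module.Basis (Fin 4) ℝ L)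
    (l1 l2 l3 l4 : ℝ)
    (h12 : ⁅b 0, b 1⁆ = l2 • b 2 - l1 • b 3)
    (h13 : ⁅b 0, b 2⁆ = l2 • b 1 + l4 • b 3)
    (h14 : ⁅b 0, b 3⁆ = -(l1 • b 1) - l4 • b 2)
    (h23 : ⁅b 1, b 2⁆ = -(l2 • b 0) - l3 • b 3)
    (h24 : ⁅b 1, b 3⁆ = l1 • b 0 + l3 • b 2)
    (h34 : ⁅b 2, b 3⁆ = -(l4 • b 0) + l3 • b 1)
    : FP b (b 0) (b 1) (b 3) = l1 ∧ FP b (b 1) (b 0) (b 3) = -l1 ∧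
      FP b (b 1) (b 0) (b 2) = l2 ∧ FP b (b 0) (b 1) (b 2) = -l2 ∧
      FP b (b 3) (b 1) (b 2) = l3 ∧ FP b (b 2) (b 1) (b 3) = -l3 ∧
      FP b (b 2) (b 0) (b 3) = l4 ∧ FP b (b 3) (b 0) (b 2) = -l4 ∧
      (∀ i j k : Fin 4, FP b (b i) (b j) (b k) = FP b (b i) (b k) (b j)) ∧
      (∀ i j k : Fin 4, (i, j, k) ∉ nonzeroTriples → FP b (b i) (b j) (b k) = 0) ∧
      (∀ x y z : L, FP b x y z + FP b y z x + FP b z x y = 0) := by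
  have hinv := gForm_lieInvariant b l1 l2 l3 l4 h12 h13 h14 h23 h24 h34
  refine ⟨?_, ?_, ?_, ?_, ?_, ?_, ?_, ?_, fun i j k => FP_comm hinv _ _ _,
    fun i j k => FP_basis_eq_zero hinv, FP_cyclic hinv⟩
  all_goals
    simp only [FP_basis, h12, h13, h14, h23, h24, ← lie_skew (b 1) (b 0), ← lie_skew (b 2) (b 0),
      ← lie_skew (b 3) (b 0), ← lie_skew (b 2) (b 1), ← lie_skew (b 3) (b 1), map_add, map_sub,
      map_neg, map_smul, LinearMap.add_apply, LinearMap.sub_apply, LinearMap.neg_apply,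
      LinearMap.smul_apply, smul_eq_mul, gForm_basis, Fin.isValue, Fin.reduceEq, ↓reduceIte, eps,
      Matrix.cons_val_zero, Matrix.cons_val_one, Matrix.cons_val]
    ring
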